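/- Let H, m ∈ ℝ, let p ≥ 2 be an integer, and let φ, ψ : ℝ × ℝ → ℝ be twice continuously differentiable functions that are 1-periodic in the second (space) variable and satisfy ∂_t φ(t,x) = e^{-Ht} ψ(t,x) and ∂_t ψ(t,x) = -m² e^{Ht} φ(t,x) - e^{Ht} |φ(t,x)|^{p-1} φ(t,x) + e^{-Ht} ∂_x² φ(t,x) for all (t,x). Define H_C(t) = ∫_0^1 [ (1/2) e^{-Ht} ψ(t,x)² + (m²/2) e^{Ht} φ(t,x)² + (1/(p+1)) e^{Ht} |φ(t,x)|^{p+1} + (1/2) e^{-Ht} (∂_x φ(t,x))² ] dx, and define the modified total Hamiltonian H̃_C(t) = H_C(t) - (H/2) ∫_0^t e^{Hs} ( ∫_0^1 [ -e^{-2Hs} ψ(s,x)² + m² φ(s,x)² + (2/(p+1)) |φ(s,x)|^{p+1} - e^{-2Hs} (∂_x φ(s,x))² ] dx ) ds. Then H̃_C(t) = H_C(0) for all t ∈ ℝ. -/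

import Mathlib

/-!
Let `E(t, x)` be the integrand of `H_C`. By the two evolution equations, and Clairaut's theorem
for `∂ₜ∂ₓφ`, the time derivative of `E` is the sum of the part coming from the explicit factors
`e^{±Ht}`, which is `(H / 2) e^{Ht}` times the integrand of the correction term, and the exact
space derivative `∂ₓ(e^{-2Ht} ψ ∂ₓφ)`: the mass and nonlinear terms cancel. The flux term
integrates to zero over a period, so differentiating under the integral sign gives
`d/dt H_C = (H / 2) e^{Ht} ∫₀¹ (…) dx`, and the theorem is the fundamental theorem of calculus.
-/

open Real Filter Function Set MeasureTheory

section PartialDeriv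

variable {E : Type*} [NormedAddCommGroup E] [NormedSpace ℝ E] {f : ℝ → ℝ → E} {t x : ℝ}

noncomputable def partialFst (f : ℝ → ℝ → E) (t x : ℝ) : E := deriv (fun s => f s x) t

noncomputable def partialSnd (f : ℝ → ℝ → E) (t x : ℝ) : E := deriv (fun y => f t y) x

lemma hasDerivAt_fst_slice (hf : DifferentiableAt ℝ (uncurry f) (t, x)) :
    HasDerivAt (fun s => f s x) (fderiv ℝ (uncurry f) (t, x) (1, 0)) t :=
  hf.hasFDerivAt.comp_hasDerivAt (f := fun s => (s, x)) t
    ((hasDerivAt_id t).prodMk (hasDerivAt_const t x))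

lemma hasDerivAt_snd_slice (hf : DifferentiableAt ℝ (uncurry f) (t, x)) :
    HasDerivAt (fun y => f t y) (fderiv ℝ (uncurry f) (t, x) (0, 1)) x :=
  hf.hasFDerivAt.comp_hasDerivAt (f := fun y => (t, y)) x
    ((hasDerivAt_const x t).prodMk (hasDerivAt_id x))

lemma partialFst_eq_fderiv (hf : DifferentiableAt ℝ (uncurry f) (t, x)) :
    partialFst f t x = fderiv ℝ (uncurry f) (t, x) (1, 0) :=
  (hasDerivAt_fst_slice hf).deriv

lemma partialSnd_eq_fderiv (hf : DifferentiableAt ℝ (uncurry f) (t, x)) :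
    partialSnd f t x = fderiv ℝ (uncurry f) (t, x) (0, 1) :=
  (hasDerivAt_snd_slice hf).deriv

lemma hasDerivAt_partialFst (hf : DifferentiableAt ℝ (uncurry f) (t, x)) :
    HasDerivAt (fun s => f s x) (partialFst f t x) t :=
  partialFst_eq_fderiv hf ▸ hasDerivAt_fst_slice hf

lemma hasDerivAt_partialSnd (hf : DifferentiableAt ℝ (uncurry f) (t, x)) :
    HasDerivAt (fun y => f t y) (partialSnd f t x) x :=
  partialSnd_eq_fderiv hf ▸ hasDerivAt_snd_slice hf

lemma uncurry_partialFst_eq_fderiv (hf : Differentiable ℝ (uncurry f)) :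
    uncurry (partialFst f) = fun q => fderiv ℝ (uncurry f) q (1, 0) :=
  funext fun q => partialFst_eq_fderiv (hf q)

lemma uncurry_partialSnd_eq_fderiv (hf : Differentiable ℝ (uncurry f)) :
    uncurry (partialSnd f) = fun q => fderiv ℝ (uncurry f) q (0, 1) :=
  funext fun q => partialSnd_eq_fderiv (hf q)

lemma ContDiff.uncurry_partialSnd {m n : WithTop ℕ∞} (hf : ContDiff ℝ n (uncurry f))
    (hmn : m + 1 ≤ n) : ContDiff ℝ m (uncurry (partialSnd f)) := by
  have hn : n ≠ 0 := by
    rintro rfl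
    simp at hmn
  rw [uncurry_partialSnd_eq_fderiv (hf.differentiable hn)]
  exact (hf.fderiv_right hmn).clm_apply contDiff_const

lemma fderiv_fderiv_apply {G : Type*} [NormedAddCommGroup G] [NormedSpace ℝ G] {F : G → E}
    {q : G} (hF : DifferentiableAt ℝ (fderiv ℝ F) q) (v w : G) :
    fderiv ℝ (fun q => fderiv ℝ F q v) q w = fderiv ℝ (fderiv ℝ F) q w v := by
  simp [fderiv_clm_apply hF (differentiableAt_const v)]

lemma partialFst_partialSnd (hf : ContDiff ℝ 2 (uncurry f)) :
    partialFst (partialSnd f) = partialSnd (partialFst f) := by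
  have hf₁ : Differentiable ℝ (uncurry f) := hf.differentiable two_ne_zero
  have hDf : Differentiable ℝ (fderiv ℝ (uncurry f)) :=
    (hf.fderiv_right (m := 1) le_rfl).differentiable one_ne_zero
  have hG (v : ℝ × ℝ) : Differentiable ℝ fun q => fderiv ℝ (uncurry f) q v :=
    hDf.clm_apply (differentiable_const v)
  ext t x
  rw [partialFst_eq_fderiv (uncurry_partialSnd_eq_fderiv hf₁ ▸ hG (0, 1) _),
    partialSnd_eq_fderiv (uncurry_partialFst_eq_fderiv hf₁ ▸ hG (1, 0) _),
    uncurry_partialSnd_eq_fderiv hf₁, uncurry_partialFst_eq_fderiv hf₁,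
    fderiv_fderiv_apply (hDf _), fderiv_fderiv_apply (hDf _)]
  exact (hf.contDiffAt.isSymmSndFDerivAt (by simp)).eq _ _

end PartialDeriv

theorem hasDerivAt_abs_pow {n : ℕ} (hn : 2 ≤ n) (u : ℝ) :
    HasDerivAt (fun v : ℝ => |v| ^ n) (n * |u| ^ (n - 2) * u) u := by
  have h := hasDerivAt_abs_rpow u (p := n) (by exact_mod_cast hn)
  have e : (n : ℝ) - 2 = ((n - 2 : ℕ) : ℝ) := by push_cast [hn]; ring
  simpa only [e, rpow_natCast] using h

theorem Function.Periodic.deriv {E : Type*} [NormedAddCommGroup E] [NormedSpace ℝ E]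
    {g : ℝ → E} {c : ℝ} (h : Periodic g c) : Periodic (deriv g) c := fun x => by
  rw [← deriv_comp_add_const, h.funext]

theorem Function.Periodic.intervalIntegral_eq_zero_of_hasDerivAt {E : Type*}
    [NormedAddCommGroup E] [NormedSpace ℝ E] [CompleteSpace E] {g g' : ℝ → E} {a c : ℝ}
    (h : Periodic g c) (hderiv : ∀ x, HasDerivAt g (g' x) x)
    (hint : IntervalIntegrable g' volume a (a + c)) :
    ∫ x in a..a + c, g' x = 0 := by
  rw [intervalIntegral.integral_eq_sub_of_hasDerivAt (fun x _ => hderiv x) hint, h a, sub_self]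

theorem hasDerivAt_intervalIntegral_of_continuous {E : Type*} [NormedAddCommGroup E]
    [NormedSpace ℝ E] {F F' : ℝ → ℝ → E} (hF : Continuous (uncurry F))
    (hF' : Continuous (uncurry F')) (hderiv : ∀ s x, HasDerivAt (fun s => F s x) (F' s x) s)
    (a b t : ℝ) :
    HasDerivAt (fun s => ∫ x in a..b, F s x) (∫ x in a..b, F' t x) t := by
  obtain ⟨C, hC⟩ := (isCompact_Icc.prod isCompact_uIcc).exists_bound_of_continuousOn
    (s := Icc (t - 1) (t + 1) ×ˢ uIcc a b) hF'.continuousOn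
  exact (intervalIntegral.hasDerivAt_integral_of_dominated_loc_of_deriv_le
    (bound := fun _ => C) (Icc_mem_nhds (by linarith) (by linarith))
    (Eventually.of_forall fun s => (hF.comp (Continuous.prodMk_right s)).aestronglyMeasurable)
    ((hF.comp (Continuous.prodMk_right t)).intervalIntegrable a b)
    (hF'.comp (Continuous.prodMk_right t)).aestronglyMeasurable
    (ae_of_all _ fun x hx s hs => hC (s, x) ⟨hs, uIoc_subset_uIcc hx⟩)
    intervalIntegrable_const
    (ae_of_all _ fun x _ s _ => hderiv s x)).2

section KleinGordon

variable {H m : ℝ} {p : ℕ} {φ ψ : ℝ → ℝ → ℝ}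

noncomputable def energyDensity (H m : ℝ) (p : ℕ) (φ ψ : ℝ → ℝ → ℝ) (t x : ℝ) : ℝ :=
  (1 / 2) * exp (-(H * t)) * (ψ t x) ^ 2
    + (m ^ 2 / 2) * exp (H * t) * (φ t x) ^ 2
    + (1 / ((p : ℝ) + 1)) * exp (H * t) * |φ t x| ^ (p + 1)
    + (1 / 2) * exp (-(H * t)) * (partialSnd φ t x) ^ 2

/-- `(H / 2) * exp (H * t)` times this is the derivative of `energyDensity` through the explicit
time dependence of its coefficients. -/
noncomputable def hubbleDensity (H m : ℝ) (p : ℕ) (φ ψ : ℝ → ℝ → ℝ) (t x : ℝ) : ℝ :=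
  -(exp (-(2 * H * t))) * (ψ t x) ^ 2
    + m ^ 2 * (φ t x) ^ 2
    + (2 / ((p : ℝ) + 1)) * |φ t x| ^ (p + 1)
    - exp (-(2 * H * t)) * (partialSnd φ t x) ^ 2

noncomputable def energyFlux (H : ℝ) (φ ψ : ℝ → ℝ → ℝ) (t x : ℝ) : ℝ :=
  exp (-(2 * H * t)) * (ψ t x * partialSnd φ t x)

lemma continuous_uncurry_energyDensity (hφ : ContDiff ℝ 1 (uncurry φ))
    (hψ : Continuous (uncurry ψ)) : Continuous (uncurry (energyDensity H m p φ ψ)) := by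
  have hφx : Continuous (uncurry (partialSnd φ)) :=
    (hφ.uncurry_partialSnd (m := 0) (by simp)).continuous
  have hφ₀ := hφ.continuous
  simp only [uncurry_def, energyDensity] at *
  fun_prop

lemma continuous_uncurry_hubbleDensity (hφ : ContDiff ℝ 1 (uncurry φ))
    (hψ : Continuous (uncurry ψ)) : Continuous (uncurry (hubbleDensity H m p φ ψ)) := by
  have hφx : Continuous (uncurry (partialSnd φ)) :=
    (hφ.uncurry_partialSnd (m := 0) (by simp)).continuous
  have hφ₀ := hφ.continuous
  simp only [uncurry_def, hubbleDensity] at *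
  fun_prop

lemma contDiff_uncurry_energyFlux (hφ : ContDiff ℝ 2 (uncurry φ))
    (hψ : ContDiff ℝ 1 (uncurry ψ)) : ContDiff ℝ 1 (uncurry (energyFlux H φ ψ)) :=
  (show ContDiff ℝ 1 fun q : ℝ × ℝ => exp (-(2 * H * q.1)) by fun_prop).mul
    (hψ.mul (hφ.uncurry_partialSnd le_rfl))

lemma periodic_energyFlux (hφper : ∀ t, Periodic (φ t) 1)
    (hψper : ∀ t, Periodic (ψ t) 1) (t : ℝ) : Periodic (energyFlux H φ ψ t) 1 := fun x => by
  have hφx : Periodic (partialSnd φ t) 1 := (hφper t).deriv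
  simp only [energyFlux, hψper t x, hφx x]

lemma hasDerivAt_energyDensity (hp : 1 ≤ p)
    (hφ : ContDiff ℝ 2 (uncurry φ)) (hψ : ContDiff ℝ 1 (uncurry ψ))
    (hevφ : ∀ t x, partialFst φ t x = exp (-(H * t)) * ψ t x)
    (hevψ : ∀ t x, partialFst ψ t x
      = -m ^ 2 * exp (H * t) * φ t x - exp (H * t) * |φ t x| ^ (p - 1) * φ t x
        + exp (-(H * t)) * partialSnd (partialSnd φ) t x)
    (t x : ℝ) :
    HasDerivAt (fun s => energyDensity H m p φ ψ s x)
      (H / 2 * exp (H * t) * hubbleDensity H m p φ ψ t x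
        + partialSnd (energyFlux H φ ψ) t x) t := by
  have hψ₁ : Differentiable ℝ (uncurry ψ) := hψ.differentiable one_ne_zero
  have hφx : Differentiable ℝ (uncurry (partialSnd φ)) :=
    (hφ.uncurry_partialSnd (m := 1) le_rfl).differentiable one_ne_zero
  have hφt : HasDerivAt (fun s => φ s x) (exp (-(H * t)) * ψ t x) t := by
    rw [← hevφ]
    exact hasDerivAt_partialFst (hφ.differentiable two_ne_zero _)
  have hψt := hevψ t x ▸ hasDerivAt_partialFst (hψ₁ (t, x))
  -- Clairaut turns the time derivative of `∂ₓφ` into `∂ₓ` of the first evolution equation.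
  have hφxt : HasDerivAt (fun s => partialSnd φ s x) (exp (-(H * t)) * partialSnd ψ t x) t := by
    have hmixed : partialFst (partialSnd φ) t x = exp (-(H * t)) * partialSnd ψ t x := by
      rw [partialFst_partialSnd hφ, partialSnd, funext₂ hevφ]
      exact deriv_const_mul _ (hasDerivAt_partialSnd (hψ₁ (t, x))).differentiableAt
    exact hmixed ▸ hasDerivAt_partialFst (hφx _)
  have habs : HasDerivAt (fun s => |φ s x| ^ (p + 1))
      ((p + 1) * |φ t x| ^ (p - 1) * φ t x * (exp (-(H * t)) * ψ t x)) t := by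
    have h := (hasDerivAt_abs_pow (n := p + 1) (by omega) (φ t x)).comp t hφt
    rwa [show p + 1 - 2 = p - 1 by omega, Nat.cast_add_one] at h
  have hexp (c : ℝ) : HasDerivAt (fun s => exp (c * s)) (exp (c * t) * c) t := by
    simpa using ((hasDerivAt_id t).const_mul c).exp
  have hexp_neg : HasDerivAt (fun s => exp (-(H * s))) (exp (-(H * t)) * -H) t := by
    simpa only [neg_mul] using hexp (-H)
  have hflux : partialSnd (energyFlux H φ ψ) t x = exp (-(2 * H * t)) *
      (partialSnd ψ t x * partialSnd φ t x + ψ t x * partialSnd (partialSnd φ) t x) :=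
    (((hasDerivAt_partialSnd (hψ₁ (t, x))).mul (hasDerivAt_partialSnd (hφx (t, x)))).const_mul
      _).deriv
  have hsum : HasDerivAt (fun s => energyDensity H m p φ ψ s x) _ t :=
    ((((hexp_neg.const_mul (1 / 2)).mul (hψt.pow 2)).add
      (((hexp H).const_mul (m ^ 2 / 2)).mul (hφt.pow 2))).add
      (((hexp H).const_mul (1 / ((p : ℝ) + 1))).mul habs)).add
      ((hexp_neg.const_mul (1 / 2)).mul (hφxt.pow 2))
  refine hsum.congr_deriv ?_
  have hexp_two : exp (-(2 * H * t)) = exp (-(H * t)) * exp (-(H * t)) := by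
    rw [← exp_add]; ring_nf
  simp only [hubbleDensity, hflux, hexp_two, exp_neg, Pi.pow_apply]
  field_simp
  ring

lemma hasDerivAt_integral_energyDensity (hp : 1 ≤ p)
    (hφ : ContDiff ℝ 2 (uncurry φ)) (hψ : ContDiff ℝ 1 (uncurry ψ))
    (hφper : ∀ t, Periodic (φ t) 1) (hψper : ∀ t, Periodic (ψ t) 1)
    (hevφ : ∀ t x, partialFst φ t x = exp (-(H * t)) * ψ t x)
    (hevψ : ∀ t x, partialFst ψ t x
      = -m ^ 2 * exp (H * t) * φ t x - exp (H * t) * |φ t x| ^ (p - 1) * φ t x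
        + exp (-(H * t)) * partialSnd (partialSnd φ) t x)
    (t : ℝ) :
    HasDerivAt (fun s => ∫ x in (0 : ℝ)..1, energyDensity H m p φ ψ s x)
      (H / 2 * (exp (H * t) * ∫ x in (0 : ℝ)..1, hubbleDensity H m p φ ψ t x)) t := by
  have hφ₁ := hφ.of_le one_le_two
  have hg := continuous_uncurry_hubbleDensity (H := H) (m := m) (p := p) hφ₁ hψ.continuous
  have hflux := contDiff_uncurry_energyFlux (H := H) hφ hψ
  have hflux' : Continuous (uncurry (partialSnd (energyFlux H φ ψ))) :=
    (hflux.uncurry_partialSnd (m := 0) (by simp)).continuous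
  have hderiv : Continuous (uncurry fun t x =>
      H / 2 * exp (H * t) * hubbleDensity H m p φ ψ t x + partialSnd (energyFlux H φ ψ) t x) := by
    simp only [uncurry_def] at *
    fun_prop
  have hgt : Continuous (hubbleDensity H m p φ ψ t) := hg.comp (Continuous.prodMk_right t)
  have hflux't : Continuous (partialSnd (energyFlux H φ ψ) t) :=
    hflux'.comp (Continuous.prodMk_right t)
  have hflux_integral : ∫ x in (0 : ℝ)..1, partialSnd (energyFlux H φ ψ) t x = 0 := by
    simpa only [zero_add] using
      (periodic_energyFlux hφper hψper t).intervalIntegral_eq_zero_of_hasDerivAt (a := 0)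
        (fun x => hasDerivAt_partialSnd (hflux.differentiable one_ne_zero _))
        (hflux't.intervalIntegrable _ _)
  refine (hasDerivAt_intervalIntegral_of_continuous
    (continuous_uncurry_energyDensity hφ₁ hψ.continuous) hderiv
    (hasDerivAt_energyDensity hp hφ hψ hevφ hevψ) 0 1 t).congr_deriv ?_
  rw [intervalIntegral.integral_add ((hgt.const_mul _).intervalIntegrable _ _)
      (hflux't.intervalIntegrable _ _),
    intervalIntegral.integral_const_mul, hflux_integral]
  ring

end KleinGordon

/-- The modified total Hamiltonian of the semilinear Klein--Gordon equation in de Sitter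
spacetime (one space dimension `n = 1`, `1`-periodic in space) is constant in time:
subtracting from `H_C` the accumulated change caused by the explicit time dependence
coming from the Hubble constant `H` yields a conserved quantity. -/
theorem deSitter_modified_total_hamiltonian_conserved
    (H m : ℝ) (p : ℕ) (hp : 2 ≤ p)
    (φ ψ : ℝ → ℝ → ℝ)
    (hφ : ContDiff ℝ 2 (Function.uncurry φ))
    (hψ : ContDiff ℝ 2 (Function.uncurry ψ))
    (hφper : ∀ t x : ℝ, φ t (x + 1) = φ t x)
    (hψper : ∀ t x : ℝ, ψ t (x + 1) = ψ t x)
    (hevφ : ∀ t x : ℝ, deriv (fun s => φ s x) t = exp (-(H * t)) * ψ t x)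
    (hevψ : ∀ t x : ℝ, deriv (fun s => ψ s x) t
      = -m ^ 2 * exp (H * t) * φ t x
        - exp (H * t) * |φ t x| ^ (p - 1) * φ t x
        + exp (-(H * t)) * deriv (deriv (fun y => φ t y)) x)
    (H_C H_C' : ℝ → ℝ)
    (hH_C : ∀ t : ℝ, H_C t = ∫ x in (0:ℝ)..1,
      ((1 / 2) * exp (-(H * t)) * (ψ t x) ^ 2
        + (m ^ 2 / 2) * exp (H * t) * (φ t x) ^ 2
        + (1 / ((p : ℝ) + 1)) * exp (H * t) * |φ t x| ^ (p + 1)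
        + (1 / 2) * exp (-(H * t)) * (deriv (fun y => φ t y) x) ^ 2))
    (hH_C' : ∀ t : ℝ, H_C' t = H_C t
      - (H / 2) * ∫ s in (0:ℝ)..t, exp (H * s) *
          ∫ x in (0:ℝ)..1,
            (-(exp (-(2 * H * s))) * (ψ s x) ^ 2
              + m ^ 2 * (φ s x) ^ 2
              + (2 / ((p : ℝ) + 1)) * |φ s x| ^ (p + 1)
              - exp (-(2 * H * s)) * (deriv (fun y => φ s y) x) ^ 2)) :
    ∀ t : ℝ, H_C' t = H_C 0 := by
  have hderiv (s : ℝ) : HasDerivAt H_C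
      (H / 2 * (exp (H * s) * ∫ x in (0 : ℝ)..1, hubbleDensity H m p φ ψ s x)) s := by
    rw [show H_C = fun s => ∫ x in (0 : ℝ)..1, energyDensity H m p φ ψ s x from funext hH_C]
    exact hasDerivAt_integral_energyDensity (by omega) hφ (hψ.of_le one_le_two) hφper hψper
      hevφ hevψ s
  have hg := continuous_uncurry_hubbleDensity (H := H) (m := m) (p := p)
    (hφ.of_le one_le_two) hψ.continuous
  have hcont : Continuous fun s =>
      H / 2 * (exp (H * s) * ∫ x in (0 : ℝ)..1, hubbleDensity H m p φ ψ s x) := by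
    fun_prop
  intro t
  have hFTC := intervalIntegral.integral_eq_sub_of_hasDerivAt (fun s _ => hderiv s)
    (hcont.intervalIntegrable 0 t)
  rw [intervalIntegral.integral_const_mul] at hFTC
  have hC' : H_C' t = H_C t - H / 2 * ∫ s in (0 : ℝ)..t,
      exp (H * s) * ∫ x in (0 : ℝ)..1, hubbleDensity H m p φ ψ s x := hH_C' t
  linarith
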